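/- Let q be a prime power and let C_{q-1} be the irreducible cyclic code of length q+1 over F_q. Then the maximum, over all nonzero codewords c ∈ C_{q-1} and all u ∈ F_q, of 𝒩(u,c)/(q+1) equals 2/(q+1). Consequently, for the systematic authentication code based on C_{q-1}, the maximum success probability of the substitution attack is P_S = 2/(q+1), so this authentication code is optimal (P_S = 1 − d/n) when q is odd and almost optimal (P_S = 1 − (d−1)/n) when q is even, where d is the minimum Hamming distance of C_{q-1} and n = q+1. -/

import Mathlib

open Polynomial

/-- The codeword `c_N(a) = (Tr(a γ^(N k)))_{k=0}^{n-1}`, a vector of length `n` over `F`. -/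
noncomputable def cwordN {F E : Type} [Field F] [Field E] [Algebra F E]
    (γ : Eˣ) (N n : ℕ) (a : E) : Fin n → F :=
  fun k => Algebra.trace F E (a * (γ : E) ^ (N * (k : ℕ)))

/-- `𝒩(t, v)`: the number of occurrences of the symbol `t` in the vector `v`. -/
def Ncount {F : Type} [DecidableEq F] {n : ℕ} (t : F) (v : Fin n → F) : ℕ :=
  (Finset.univ.filter fun k => v k = t).card

/-- Hamming weight of a vector. -/
def hwt {F : Type} [Field F] [DecidableEq F] {n : ℕ} (v : Fin n → F) : ℕ :=
  (Finset.univ.filter fun k => v k ≠ 0).card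

/-!
With `ζ = γ ^ (q - 1)`, a primitive `(q + 1)`-th root of unity, the `k`-th entry of `c(a)` is
`Tr(a ζ^k) = a ζ^k + (a ζ^k)^q`. As `(ζ^k)^q = ζ^(-k)`, this entry equals `t` only if `ζ^k` is a
root of `a X^2 - t X + a^q`, so no symbol occurs more than twice, while `q + 1` entries in `q`
symbols force some symbol to occur twice.
For `q` odd, a nonzero `a` with `Tr a = 0` vanishes at `ζ^0 = 1` and `ζ^((q+1)/2) = -1`, so
`d = q - 1`. For `q` even, `a X^2 + a^q` has at most one root (squaring is injective in
characteristic `2`) and `Tr 1 = 2 = 0`, so `d = q`.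
-/

open Finset

section Counting

variable {F : Type} [DecidableEq F] {n : ℕ}

lemma Ncount_zero_add_hwt [Field F] (v : Fin n → F) : Ncount 0 v + hwt v = n := by
  simpa [Ncount, hwt] using card_filter_add_card_filter_not (s := univ) (fun k => v k = 0)

lemma exists_one_lt_Ncount [Fintype F] (v : Fin n → F) (h : Fintype.card F < n) :
    ∃ t, 1 < Ncount t v :=
  Fintype.exists_lt_card_fiber_of_mul_lt_card v (by simpa using h)

lemma sInf_hwt_eq {ι : Type*} [Zero ι] [Field F] (c : ι → Fin n → F) {z : ℕ}
    (hle : ∀ a, a ≠ 0 → Ncount 0 (c a) ≤ z) (hex : ∃ a, a ≠ 0 ∧ z ≤ Ncount 0 (c a)) :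
    sInf {w : ℕ | ∃ a : ι, a ≠ 0 ∧ w = hwt (c a)} = n - z := by
  obtain ⟨a, ha, hz⟩ := hex
  apply le_antisymm
  · refine Nat.sInf_le ⟨a, ha, ?_⟩
    have := Ncount_zero_add_hwt (c a)
    have := hle a ha
    omega
  · refine le_csInf ⟨_, a, ha, rfl⟩ ?_
    rintro w ⟨b, hb, rfl⟩
    have := Ncount_zero_add_hwt (c b)
    have := hle b hb
    omega

end Counting

section UnitCircle

variable {K : Type*} [Field K] {q : ℕ} {ζ a : K}

lemma quadratic_eq_zero_of_pow_succ_eq_one {u t : K} (hu : u ^ (q + 1) = 1)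
    (h : a * u + (a * u) ^ q = t) : a * u ^ 2 - t * u + a ^ q = 0 := by
  linear_combination u * h - a ^ q * hu

lemma IsPrimitiveRoot.pow_pow_succ_eq_one (hζ : IsPrimitiveRoot ζ (q + 1)) (k : ℕ) :
    (ζ ^ k) ^ (q + 1) = 1 := by
  rw [← pow_mul, mul_comm, pow_mul, hζ.pow_eq_one, one_pow]

lemma card_le_two_of_isPrimitiveRoot (hζ : IsPrimitiveRoot ζ (q + 1)) (ha : a ≠ 0) {t : K}
    (s : Finset (Fin (q + 1))) (hs : ∀ k ∈ s, a * ζ ^ (k : ℕ) + (a * ζ ^ (k : ℕ)) ^ q = t) :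
    #s ≤ 2 := by
  classical
  let P : K[X] := C a * X ^ 2 + C (-t) * X + C (a ^ q)
  have hroot : ∀ k ∈ s, ζ ^ (k : ℕ) ∈ P.roots.toFinset := fun k hk => by
    have := quadratic_eq_zero_of_pow_succ_eq_one (hζ.pow_pow_succ_eq_one k) (hs k hk)
    simp only [Multiset.mem_toFinset, mem_roots', IsRoot.def]
    exact ⟨ne_zero_of_natDegree_gt (n := 0) (by rw [natDegree_quadratic ha]; norm_num),
      by simp only [P, eval_add, eval_mul, eval_C, eval_pow, eval_X]; linear_combination this⟩
  calc #s ≤ #P.roots.toFinset :=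
        card_le_card_of_injOn _ hroot fun i _ j _ h => Fin.ext (hζ.pow_inj i.2 j.2 h)
    _ ≤ Multiset.card P.roots := Multiset.toFinset_card_le _
    _ ≤ 2 := natDegree_quadratic (c := a ^ q) (b := -t) ha ▸ card_roots' P

lemma card_le_one_of_isPrimitiveRoot_of_two_eq_zero (h2 : (2 : K) = 0)
    (hζ : IsPrimitiveRoot ζ (q + 1)) (ha : a ≠ 0) (s : Finset (Fin (q + 1)))
    (hs : ∀ k ∈ s, a * ζ ^ (k : ℕ) + (a * ζ ^ (k : ℕ)) ^ q = 0) : #s ≤ 1 := by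
  refine card_le_one.2 fun i hi j hj => Fin.ext (hζ.pow_inj i.2 j.2 ?_)
  have hi' := quadratic_eq_zero_of_pow_succ_eq_one (hζ.pow_pow_succ_eq_one i) (hs i hi)
  have hj' := quadratic_eq_zero_of_pow_succ_eq_one (hζ.pow_pow_succ_eq_one j) (hs j hj)
  have : a * (ζ ^ (i : ℕ) - ζ ^ (j : ℕ)) ^ 2 = 0 := by
    linear_combination hi' - hj' - a * ζ ^ (j : ℕ) * (ζ ^ (i : ℕ) - ζ ^ (j : ℕ)) * h2
  exact sub_eq_zero.1 (pow_eq_zero_iff two_ne_zero |>.1 ((mul_eq_zero.1 this).resolve_left ha))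

end UnitCircle

lemma FiniteField.two_eq_zero_of_even_card {q : ℕ} {F E : Type*} [Field F] [Fintype F] [Semiring E]
    [Algebra F E] (hF : Fintype.card F = q) (heven : Even q) : (2 : E) = 0 := by
  have : ringChar F = 2 := FiniteField.even_card_iff_char_two.2 (hF ▸ Nat.even_iff.1 heven)
  have : CharP F 2 := ringChar.of_eq this
  rw [← map_ofNat (algebraMap F E) 2, CharTwo.two_eq_zero, map_zero]

lemma isPrimitiveRoot_pow_sub_one {q : ℕ} {E : Type*} [Field E] [Fintype E]
    (hE : Fintype.card E = q ^ 2) {γ : Eˣ} (hγ : ∀ x, x ∈ Subgroup.zpowers γ) :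
    IsPrimitiveRoot ((γ : E) ^ (q - 1)) (q + 1) := by
  classical
  have hq : 1 < q := by
    have : 1 < q ^ 2 := hE ▸ Fintype.one_lt_card
    nlinarith
  have hγ' : IsPrimitiveRoot (γ : E) ((q - 1) * (q + 1)) := by
    rw [IsPrimitiveRoot.coe_units_iff]
    convert IsPrimitiveRoot.orderOf γ
    rw [orderOf_eq_card_of_forall_mem_zpowers hγ, Nat.card_eq_fintype_card, Fintype.card_units, hE,
      mul_comm, ← Nat.sq_sub_sq, one_pow]
  simpa [Nat.mul_div_cancel_left _ (by omega : 0 < q - 1)] using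
    hγ'.pow_of_dvd (p := q - 1) (by omega) (dvd_mul_right _ _)

section Code

variable {q : ℕ} {F E : Type} [Field F] [Fintype F] [Field E] [Fintype E] [Algebra F E]

lemma finrank_eq_two_of_card_eq_sq (hF : Fintype.card F = q) (hE : Fintype.card E = q ^ 2) :
    Module.finrank F E = 2 := by
  have h := Module.card_eq_pow_finrank (K := F) (V := E)
  rw [hF, hE] at h
  exact Nat.pow_right_injective (hF ▸ Fintype.one_lt_card) h.symm

lemma algebraMap_trace_eq_add_pow (hF : Fintype.card F = q) (hE : Fintype.card E = q ^ 2)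
    (x : E) : algebraMap F E (Algebra.trace F E x) = x + x ^ q := by
  rw [FiniteField.algebraMap_trace_eq_sum_pow, finrank_eq_two_of_card_eq_sq hF hE,
    Nat.card_eq_fintype_card, hF]
  simp [Finset.sum_range_succ]

lemma cwordN_eq_iff (hF : Fintype.card F = q) (hE : Fintype.card E = q ^ 2) (γ : Eˣ) {n : ℕ}
    (a : E) (k : Fin n) (t : F) :
    cwordN γ (q - 1) n a k = t ↔
      a * ((γ : E) ^ (q - 1)) ^ (k : ℕ) + (a * ((γ : E) ^ (q - 1)) ^ (k : ℕ)) ^ q =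
        algebraMap F E t := by
  rw [← (algebraMap F E).injective.eq_iff, cwordN, algebraMap_trace_eq_add_pow hF hE, pow_mul]

lemma exists_ne_zero_trace_eq_zero (hF : Fintype.card F = q) (hE : Fintype.card E = q ^ 2) :
    ∃ a : E, a ≠ 0 ∧ Algebra.trace F E a = 0 := by
  obtain ⟨a, ha, ha0⟩ := (Submodule.ne_bot_iff _).1 <|
    LinearMap.ker_ne_bot_of_finrank_lt (f := Algebra.trace F E)
      (by rw [finrank_eq_two_of_card_eq_sq hF hE, Module.finrank_self]; norm_num)
  exact ⟨a, ha0, ha⟩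

variable [DecidableEq F] {γ : Eˣ}

lemma Ncount_cwordN_le_two (hF : Fintype.card F = q) (hE : Fintype.card E = q ^ 2)
    (hγ : ∀ x, x ∈ Subgroup.zpowers γ) {a : E} (ha : a ≠ 0) (t : F) :
    Ncount t (cwordN γ (q - 1) (q + 1) a) ≤ 2 :=
  card_le_two_of_isPrimitiveRoot (isPrimitiveRoot_pow_sub_one hE hγ) ha _
    fun k hk => (cwordN_eq_iff hF hE γ a k t).1 (mem_filter.1 hk).2

lemma Ncount_zero_cwordN_le_one_of_even (hF : Fintype.card F = q) (hE : Fintype.card E = q ^ 2)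
    (hγ : ∀ x, x ∈ Subgroup.zpowers γ) (heven : Even q) {a : E} (ha : a ≠ 0) :
    Ncount (0 : F) (cwordN γ (q - 1) (q + 1) a) ≤ 1 :=
  card_le_one_of_isPrimitiveRoot_of_two_eq_zero (FiniteField.two_eq_zero_of_even_card hF heven)
    (isPrimitiveRoot_pow_sub_one hE hγ) ha _
    fun k hk => by simpa using (cwordN_eq_iff hF hE γ a k 0).1 (mem_filter.1 hk).2

lemma one_le_Ncount_zero_cwordN_one_of_even (hF : Fintype.card F = q)
    (hE : Fintype.card E = q ^ 2) (heven : Even q) :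
    1 ≤ Ncount (0 : F) (cwordN γ (q - 1) (q + 1) (1 : E)) := by
  refine card_pos.2 ⟨0, mem_filter.2 ⟨mem_univ _, (cwordN_eq_iff hF hE γ 1 0 0).2 ?_⟩⟩
  simpa [one_add_one_eq_two] using FiniteField.two_eq_zero_of_even_card (E := E) hF heven

lemma exists_two_le_Ncount_zero_cwordN_of_odd (hF : Fintype.card F = q)
    (hE : Fintype.card E = q ^ 2) (hγ : ∀ x, x ∈ Subgroup.zpowers γ) (hodd : Odd q) :
    ∃ a : E, a ≠ 0 ∧ 2 ≤ Ncount (0 : F) (cwordN γ (q - 1) (q + 1) a) := by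
  obtain ⟨m, rfl⟩ := hodd
  have hζ := isPrimitiveRoot_pow_sub_one hE hγ
  have hneg : ((γ : E) ^ (2 * m + 1 - 1)) ^ (m + 1) = -1 := by
    refine IsPrimitiveRoot.eq_neg_one_of_two_right ?_
    simpa [show 2 * m + 1 + 1 = (m + 1) * 2 by ring] using
      hζ.pow_of_dvd (p := m + 1) (by omega) ⟨2, by ring⟩
  obtain ⟨a, ha, htr⟩ := exists_ne_zero_trace_eq_zero (E := E) hF hE
  have hsum : a + a ^ (2 * m + 1) = 0 := by
    simpa [htr] using (algebraMap_trace_eq_add_pow hF hE a).symm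
  refine ⟨a, ha, one_lt_card.2 ⟨0, ?_, ⟨m + 1, by omega⟩, ?_, by simp [Fin.ext_iff]⟩⟩
  · exact mem_filter.2 ⟨mem_univ _, (cwordN_eq_iff hF hE γ a _ 0).2 (by simpa using hsum)⟩
  · refine mem_filter.2 ⟨mem_univ _, (cwordN_eq_iff hF hE γ a _ 0).2 ?_⟩
    rw [hneg, mul_neg_one, (odd_two_mul_add_one m).neg_pow, map_zero]
    linear_combination -hsum

end Code

theorem stmt_19 (q : ℕ) (F E : Type) [Field F] [Fintype F] [DecidableEq F]
    [Field E] [Fintype E] [Algebra F E]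
    (hF : Fintype.card F = q) (hE : Fintype.card E = q ^ 2)
    (γ : Eˣ) (hγ : ∀ x : Eˣ, x ∈ Subgroup.zpowers γ)
    -- the minimum Hamming distance of the (linear) code `C_{q-1}`
    (d : ℕ) (hd : d = sInf {w : ℕ | ∃ a : E, a ≠ 0 ∧ w = hwt (cwordN (F := F) γ (q - 1) (q + 1) a)}) :
    IsGreatest
      {x : ℚ | ∃ a : E, a ≠ 0 ∧ ∃ u : F,
        x = (Ncount u (cwordN γ (q - 1) (q + 1) a) : ℚ) / (q + 1)}
      ((2 : ℚ) / (q + 1)) ∧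
    (Odd q → (2 : ℚ) / (q + 1) = 1 - (d : ℚ) / (q + 1)) ∧
    (Even q → (2 : ℚ) / (q + 1) = 1 - ((d : ℚ) - 1) / (q + 1)) := by
  have hle_two := fun (a : E) (ha : a ≠ 0) => Ncount_cwordN_le_two hF hE hγ ha
  refine ⟨⟨?_, ?_⟩, fun hodd => ?_, fun heven => ?_⟩
  · obtain ⟨t, ht⟩ := exists_one_lt_Ncount (cwordN (F := F) γ (q - 1) (q + 1) (1 : E)) (by omega)
    refine ⟨1, one_ne_zero, t, ?_⟩
    rw [le_antisymm (hle_two 1 one_ne_zero t) ht]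
    norm_num
  · rintro x ⟨a, ha, u, rfl⟩
    gcongr
    exact_mod_cast hle_two a ha u
  · obtain ⟨a, ha, h2⟩ := exists_two_le_Ncount_zero_cwordN_of_odd hF hE hγ hodd
    rw [hd, sInf_hwt_eq _ (fun a ha => hle_two a ha 0) ⟨a, ha, h2⟩, Nat.cast_sub (by grind)]
    push_cast
    field_simp
    ring
  · rw [hd, sInf_hwt_eq _ (fun a ha => Ncount_zero_cwordN_le_one_of_even hF hE hγ heven ha)
      ⟨1, one_ne_zero, one_le_Ncount_zero_cwordN_one_of_even hF hE heven⟩]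
    push_cast
    field_simp
    ring
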